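/- Let W_1,…,W_m be linear subspaces of V and let M = ∪_{i=1}^m W_i. If the set ∪_{i,j=1}^m (W_i + W_j) is transverse to the orbits of H, then the second moment is bi-Lipschitz on M; that is, there exist constants 0 < C₁ ≤ C₂ < ∞ such that C₁·d_σ(X,Y) ≤ ‖√(XᵀX) − √(YᵀY)‖ ≤ C₂·d_σ(X,Y) for all X,Y ∈ M. -/

import Mathlib

open scoped BigOperators
open Matrix

namespace GPR

variable {L : ℕ} {N R : Fin L → ℕ}

/-- The signal space: `L`-tuples of real `N ℓ × R ℓ` matrices. -/
abbrev V (N R : Fin L → ℕ) := ∀ ℓ : Fin L, Matrix (Fin (N ℓ)) (Fin (R ℓ)) ℝ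

/-- Frobenius norm of a tuple of matrices: `(Σ_ℓ Σ_{i,j} (X_ℓ)_{ij}²)^{1/2}`. -/
noncomputable def fnorm {m n : Fin L → ℕ} (X : ∀ ℓ : Fin L, Matrix (Fin (m ℓ)) (Fin (n ℓ)) ℝ) : ℝ :=
  Real.sqrt (∑ ℓ, ∑ i, ∑ j, (X ℓ i j) ^ 2)

/-- The group `H = ∏_ℓ O(N ℓ)`, as tuples of orthogonal matrices. -/
abbrev HGroup (N : Fin L → ℕ) := ∀ ℓ : Fin L, Matrix.orthogonalGroup (Fin (N ℓ)) ℝ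

/-- The action of `H` on `V`: `(Q · X)_ℓ = Q_ℓ X_ℓ`. -/
def act (Q : HGroup N) (X : V N R) : V N R :=
  fun ℓ => (Q ℓ : Matrix (Fin (N ℓ)) (Fin (N ℓ)) ℝ) * X ℓ

/-- `d_σ(X,Y) = min(‖X−Y‖, ‖X+Y‖)`. -/
noncomputable def dSigma (X Y : V N R) : ℝ := min (fnorm (X - Y)) (fnorm (X + Y))

/-- `d_H(X,Y) = min_{Q ∈ H} ‖X − Q·Y‖`. -/
noncomputable def dH (X Y : V N R) : ℝ := ⨅ Q : HGroup N, fnorm (X - act Q Y)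

/-- The positive semidefinite square root `√(XᵀX)` of the Gram matrix of a single matrix. -/
noncomputable def gramSqrt {n d : ℕ} (X : Matrix (Fin n) (Fin d) ℝ) : Matrix (Fin d) (Fin d) ℝ :=
  (Matrix.posSemidef_conjTranspose_mul_self X).1.eigenvectorUnitary.1 *
    Matrix.diagonal (Real.sqrt ∘ (Matrix.posSemidef_conjTranspose_mul_self X).1.eigenvalues) *
    (star (Matrix.posSemidef_conjTranspose_mul_self X).1.eigenvectorUnitary : Matrix (Fin d) (Fin d) ℝ)

/-- The tuple `√(XᵀX) = (√(X₁ᵀX₁), …, √(X_LᵀX_L))`. -/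
noncomputable def sqrtGram (X : V N R) : ∀ ℓ : Fin L, Matrix (Fin (R ℓ)) (Fin (R ℓ)) ℝ :=
  fun ℓ => gramSqrt (X ℓ)

/-- The second moment: tuple of Gram matrices `XᵀX = (X₁ᵀX₁, …, X_LᵀX_L)`. -/
def gram (X : V N R) : ∀ ℓ : Fin L, Matrix (Fin (R ℓ)) (Fin (R ℓ)) ℝ :=
  fun ℓ => (X ℓ)ᵀ * X ℓ

/-- A set `S ⊆ V` is transverse to the orbits of `H` if whenever `X ∈ S` and `Q·X ∈ S`,
one has `Q·X = X` or `Q·X = −X`. -/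
def Transverse (S : Set (V N R)) : Prop :=
  ∀ X ∈ S, ∀ Q : HGroup N, act Q X ∈ S → act Q X = X ∨ act Q X = -X

/-!
Upper bound: the Araki–Yamagami inequality `‖√(AᵀA) - √(BᵀB)‖ ≤ √2 ‖A - B‖` (Frobenius norms)
follows from the fact that `|·|`, being 1-Lipschitz, acts 1-Lipschitzly on Hermitian matrices in
the Frobenius norm, applied to the Hermitian dilations `!![0, Aᵀ; A, 0]`, whose absolute values
are `!![√(AᵀA), 0; 0, √(AAᵀ)]`. As `√(XᵀX)` is even in `X`, the bound also holds with `X + Y`.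

Lower bound: with `u = X - Y` and `v = X + Y` one has `uᵀv + vᵀu = 2 (XᵀX - YᵀY)`. For `u, v` in
`W i + W j`, `uᵀv + vᵀu = 0` means that `v + u` and `v - u` have the same second moment, hence
lie in one `H`-orbit, and transversality forces `u = 0` or `v = 0`. Compactness of the unit
sphere then gives `‖uᵀv + vᵀu‖ ≥ c ‖u‖ ‖v‖` on each of the finitely many `W i + W j`. Combined with
`‖XᵀX - YᵀY‖ ≤ ‖√(XᵀX) - √(YᵀY)‖ (‖X‖ + ‖Y‖)` and `d_σ(X, Y) (‖X‖ + ‖Y‖) ≤ 2 ‖X - Y‖ ‖X + Y‖`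
this yields `C₁ = c / 4`.
-/

end GPR

theorem exists_pos_forall_le_of_finite {ι : Type*} [Finite ι] {c : ι → ℝ} (hc : ∀ i, 0 < c i) :
    ∃ c₀ > 0, ∀ i, c₀ ≤ c i := by
  rcases isEmpty_or_nonempty ι with hι | hι
  · exact ⟨1, one_pos, isEmptyElim⟩
  · obtain ⟨i, hi⟩ := Finite.exists_min c
    exact ⟨c i, hc i, hi⟩

theorem min_norm_sub_norm_add_mul_le {E : Type*} [SeminormedAddCommGroup E] [NormedSpace ℝ E]
    (x y : E) : min ‖x - y‖ ‖x + y‖ * (‖x‖ + ‖y‖) ≤ 2 * (‖x - y‖ * ‖x + y‖) := by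
  have hx : 2 * ‖x‖ ≤ ‖x - y‖ + ‖x + y‖ := by
    have := norm_add_le (x - y) (x + y)
    rwa [show x - y + (x + y) = (2 : ℝ) • x by rw [two_smul]; abel, norm_smul,
      Real.norm_two] at this
  have hy : 2 * ‖y‖ ≤ ‖x - y‖ + ‖x + y‖ := by
    have := norm_sub_le (x + y) (x - y)
    rwa [show x + y - (x - y) = (2 : ℝ) • y by rw [two_smul]; abel, norm_smul,
      Real.norm_two, add_comm] at this
  rcases le_total ‖x - y‖ ‖x + y‖ with h | h
  · rw [min_eq_left h]; nlinarith [norm_nonneg (x - y)]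
  · rw [min_eq_right h]; nlinarith [norm_nonneg (x + y)]

theorem LinearMap.exists_pos_mul_norm_mul_norm_le {E F G : Type*} [NormedAddCommGroup E]
    [NormedSpace ℝ E] [FiniteDimensional ℝ E] [NormedAddCommGroup F] [NormedSpace ℝ F]
    [FiniteDimensional ℝ F] [NormedAddCommGroup G] [NormedSpace ℝ G]
    (B : E →ₗ[ℝ] F →ₗ[ℝ] G) (hB : ∀ u v, B u v = 0 → u = 0 ∨ v = 0) :
    ∃ c > 0, ∀ u v, c * (‖u‖ * ‖v‖) ≤ ‖B u v‖ := by
  have hcont : Continuous fun p : E × F => B p.1 p.2 :=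
    (LinearMap.toContinuousLinearMap
      (LinearMap.toContinuousLinearMap.toLinearMap ∘ₗ B)).continuous₂
  obtain ⟨c, hc, hcK⟩ := ((isCompact_sphere (0 : E) 1).prod
    (isCompact_sphere (0 : F) 1)).exists_forall_le' hcont.norm.continuousOn (a := 0)
    fun p hp => norm_pos_iff.mpr fun h0 => by
      rcases hB _ _ h0 with h | h
      · simpa [h] using hp.1
      · simpa [h] using hp.2
  refine ⟨c, hc, fun u v => ?_⟩
  rcases eq_or_ne u 0 with rfl | hu
  · simp
  rcases eq_or_ne v 0 with rfl | hv
  · simp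
  have := hcK (‖u‖⁻¹ • u, ‖v‖⁻¹ • v) ⟨by simp [norm_smul, hu], by simp [norm_smul, hv]⟩
  simp only [map_smul, LinearMap.smul_apply, norm_smul, norm_inv, norm_norm] at this
  rw [← le_div_iff₀ (by positivity)]
  convert this using 1
  field_simp

theorem Submodule.exists_pos_mul_norm_mul_norm_le {E G : Type*} [NormedAddCommGroup E]
    [NormedSpace ℝ E] [FiniteDimensional ℝ E] [NormedAddCommGroup G] [NormedSpace ℝ G]
    (T : Submodule ℝ E) (B : E →ₗ[ℝ] E →ₗ[ℝ] G)
    (hB : ∀ u ∈ T, ∀ v ∈ T, B u v = 0 → u = 0 ∨ v = 0) :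
    ∃ c > 0, ∀ u ∈ T, ∀ v ∈ T, c * (‖u‖ * ‖v‖) ≤ ‖B u v‖ := by
  obtain ⟨c, hc, hcT⟩ := (B.compl₁₂ T.subtype T.subtype).exists_pos_mul_norm_mul_norm_le
    fun u v huv => by simpa using hB u u.2 v v.2 huv
  exact ⟨c, hc, fun u hu v hv => hcT ⟨u, hu⟩ ⟨v, hv⟩⟩

theorem LinearMap.exists_linearIsometryEquiv_comp_eq {𝕜 E F : Type*} [RCLike 𝕜] [AddCommGroup E]
    [Module 𝕜 E] [NormedAddCommGroup F] [InnerProductSpace 𝕜 F] [FiniteDimensional 𝕜 F]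
    {a b : E →ₗ[𝕜] F} (h : ∀ x, ‖a x‖ = ‖b x‖) :
    ∃ q : F ≃ₗᵢ[𝕜] F, ∀ x, q (a x) = b x := by
  obtain ⟨g, hg⟩ := a.rangeRestrict.exists_rightInverse_of_surjective a.range_rangeRestrict
  have hag : ∀ s, a (g s) = s := fun s => congrArg Subtype.val (LinearMap.congr_fun hg s)
  let φ : LinearMap.range a →ₗᵢ[𝕜] F :=
    { toLinearMap := b ∘ₗ g
      norm_map' := fun s => by simp [← h, hag] }
  refine ⟨φ.extend.toLinearIsometryEquiv rfl, fun x => ?_⟩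
  have hφ : φ ⟨a x, LinearMap.mem_range_self a x⟩ = b x := by
    rw [← sub_eq_zero, ← norm_eq_zero]
    show ‖b (g ⟨a x, _⟩) - b x‖ = 0
    rw [← map_sub, ← h, map_sub, hag, sub_self, norm_zero]
  exact (φ.extend_apply _).trans hφ

namespace Matrix

section Unitary

variable {𝕜 m n : Type*} [RCLike 𝕜] [Fintype m] [Fintype n] [DecidableEq m] [DecidableEq n]

open scoped InnerProductSpace in
theorem exists_mem_unitaryGroup_mul_eq_of_conjTranspose_mul_self_eq {A B : Matrix m n 𝕜}
    (h : Aᴴ * A = Bᴴ * B) : ∃ U ∈ unitaryGroup m 𝕜, U * A = B := by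
  have hnorm : ∀ x, ‖toEuclideanLin A x‖ = ‖toEuclideanLin B x‖ := fun x => by
    have hgram : ∀ C : Matrix m n 𝕜, ⟪toEuclideanLin C x, toEuclideanLin C x⟫_𝕜 =
        star x.ofLp ⬝ᵥ (Cᴴ * C) *ᵥ x.ofLp := fun C => by
      rw [EuclideanSpace.inner_eq_star_dotProduct, toLpLin_apply, dotProduct_comm, star_mulVec,
        ← dotProduct_mulVec, mulVec_mulVec]
    rw [← sq_eq_sq₀ (norm_nonneg _) (norm_nonneg _), ← RCLike.ofReal_inj (K := 𝕜)]
    push_cast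
    rw [← inner_self_eq_norm_sq_to_K, ← inner_self_eq_norm_sq_to_K, hgram, hgram, h]
  obtain ⟨q, hq⟩ := LinearMap.exists_linearIsometryEquiv_comp_eq hnorm
  set u := Unitary.linearIsometryEquiv.symm q
  set U : Matrix m m 𝕜 := (toEuclideanCLM (n := m) (𝕜 := 𝕜)).symm u
  have hU : toEuclideanCLM (n := m) (𝕜 := 𝕜) U = (q : EuclideanSpace 𝕜 m →L[𝕜] _) :=
    (StarAlgEquiv.apply_symm_apply _ _).trans (Unitary.coe_symm_linearIsometryEquiv_apply q)
  refine ⟨U, Unitary.map_mem _ u.2, ext_iff_mulVec.mpr fun v => ?_⟩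
  rw [← mulVec_mulVec]
  calc _ = (toEuclideanCLM (n := m) (𝕜 := 𝕜) U (WithLp.toLp 2 (A *ᵥ v))).ofLp := rfl
    _ = B *ᵥ v := by rw [hU]; exact congrArg WithLp.ofLp (hq (WithLp.toLp 2 v))

end Unitary

theorem fromBlocks_sub {l m n o α : Type*} [Sub α] (P P' : Matrix n l α) (Q Q' : Matrix n o α)
    (R R' : Matrix m l α) (S S' : Matrix m o α) :
    fromBlocks P Q R S - fromBlocks P' Q' R' S' =
      fromBlocks (P - P') (Q - Q') (R - R') (S - S') := by
  ext (i | i) (j | j) <;> rfl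

open scoped Matrix.Norms.Frobenius

section Frobenius

variable {l m n o : Type*} [Fintype l] [Fintype m] [Fintype n] [Fintype o]

theorem frobenius_norm_sq_eq_sum (A : Matrix m n ℝ) : ‖A‖ ^ 2 = ∑ i, ∑ j, A i j ^ 2 := by
  rw [frobenius_norm_def, ← Real.rpow_natCast, ← Real.rpow_mul (by positivity)]
  norm_num [Real.norm_eq_abs, sq_abs]

theorem frobenius_norm_sq_eq_trace (A : Matrix m n ℝ) : ‖A‖ ^ 2 = trace (Aᴴ * A) := by
  rw [frobenius_norm_sq_eq_sum, Finset.sum_comm]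
  simp [trace, mul_apply, sq]

theorem frobenius_norm_fromBlocks_sq (P : Matrix n l ℝ) (Q : Matrix n o ℝ) (R : Matrix m l ℝ)
    (S : Matrix m o ℝ) :
    ‖fromBlocks P Q R S‖ ^ 2 = ‖P‖ ^ 2 + ‖Q‖ ^ 2 + ‖R‖ ^ 2 + ‖S‖ ^ 2 := by
  simp only [frobenius_norm_sq_eq_sum, Fintype.sum_sum_type, fromBlocks_apply₁₁,
    fromBlocks_apply₁₂, fromBlocks_apply₂₁, fromBlocks_apply₂₂, Finset.sum_add_distrib]
  ring

theorem frobenius_norm_orthogonal_mul [DecidableEq m] {U : Matrix m m ℝ}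
    (hU : U ∈ orthogonalGroup m ℝ) (A : Matrix m n ℝ) : ‖U * A‖ = ‖A‖ := by
  rw [← sq_eq_sq₀ (norm_nonneg _) (norm_nonneg _), frobenius_norm_sq_eq_trace,
    frobenius_norm_sq_eq_trace, conjTranspose_mul, Matrix.mul_assoc, ← Matrix.mul_assoc Uᴴ,
    ← star_eq_conjTranspose, Unitary.star_mul_self_of_mem hU, Matrix.one_mul]

theorem frobenius_norm_mul_orthogonal [DecidableEq n] {U : Matrix n n ℝ}
    (hU : U ∈ orthogonalGroup n ℝ) (A : Matrix m n ℝ) : ‖A * U‖ = ‖A‖ := by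
  rw [← frobenius_norm_transpose, transpose_mul, frobenius_norm_orthogonal_mul,
    frobenius_norm_transpose]
  rw [mem_orthogonalGroup_iff', transpose_transpose]
  exact (mem_orthogonalGroup_iff _ _).mp hU

end Frobenius

namespace IsHermitian

variable {n : Type*} [Fintype n] [DecidableEq n] {X Y : Matrix n n ℝ}

theorem norm_cfc_sub_cfc_sq (hX : X.IsHermitian) (hY : Y.IsHermitian) (f g : ℝ → ℝ) :
    ‖cfc f X - cfc g Y‖ ^ 2 = ∑ i, ∑ j, ((f (hX.eigenvalues i) - g (hY.eigenvalues j)) *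
      (star (hX.eigenvectorUnitary : Matrix n n ℝ) * hY.eigenvectorUnitary) i j) ^ 2 := by
  set U : Matrix n n ℝ := ↑hX.eigenvectorUnitary
  set V : Matrix n n ℝ := ↑hY.eigenvectorUnitary
  have hU : U ∈ orthogonalGroup n ℝ := hX.eigenvectorUnitary.2
  have hV : star V ∈ orthogonalGroup n ℝ := (star hY.eigenvectorUnitary).2
  have hUU : U * star U = 1 := Unitary.mul_star_self_of_mem hU
  have hVV : V * star V = 1 := Unitary.mul_star_self_of_mem hY.eigenvectorUnitary.2
  have hsplit : cfc f X - cfc g Y = U * (diagonal (f ∘ hX.eigenvalues) * (star U * V) -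
      (star U * V) * diagonal (g ∘ hY.eigenvalues)) * star V := by
    rw [hX.cfc_eq, hY.cfc_eq, IsHermitian.cfc, IsHermitian.cfc]
    simp only [Unitary.conjStarAlgAut_apply, RCLike.ofReal_real_eq_id, Function.id_comp]
    calc _ = U * diagonal (f ∘ hX.eigenvalues) * star U * (V * star V)
          - (U * star U) * V * diagonal (g ∘ hY.eigenvalues) * star V := by
            rw [hUU, hVV, Matrix.mul_one, Matrix.one_mul]
      _ = _ := by noncomm_ring
  rw [hsplit, frobenius_norm_mul_orthogonal hV, frobenius_norm_orthogonal_mul hU,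
    frobenius_norm_sq_eq_sum]
  simp [diagonal_mul, mul_diagonal, sub_mul, mul_comm]

theorem norm_cfc_sub_cfc_le (hX : X.IsHermitian) (hY : Y.IsHermitian) {f : ℝ → ℝ}
    (hf : LipschitzWith 1 f) : ‖cfc f X - cfc f Y‖ ≤ ‖X - Y‖ := by
  refine (sq_le_sq₀ (norm_nonneg _) (norm_nonneg _)).mp ?_
  conv_rhs => rw [← cfc_id' ℝ X, ← cfc_id' ℝ Y]
  rw [hX.norm_cfc_sub_cfc_sq hY, hX.norm_cfc_sub_cfc_sq hY]
  refine Finset.sum_le_sum fun i _ => Finset.sum_le_sum fun j _ => ?_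
  rw [mul_pow, mul_pow]
  refine mul_le_mul_of_nonneg_right (sq_le_sq.mpr ?_) (sq_nonneg _)
  simpa [Real.dist_eq] using hf.dist_le_mul (hX.eigenvalues i) (hY.eigenvalues j)

end IsHermitian

open scoped MatrixOrder

variable {m n : Type*} [Fintype m] [Fintype n] [DecidableEq n]

theorem norm_sqrt_conjTranspose_mul_self (A : Matrix m n ℝ) : ‖CFC.sqrt (Aᴴ * A)‖ = ‖A‖ := by
  rw [← sq_eq_sq₀ (norm_nonneg _) (norm_nonneg _), frobenius_norm_sq_eq_trace,
    frobenius_norm_sq_eq_trace, (CFC.sqrt_nonneg _).posSemidef.1.eq,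
    CFC.sqrt_mul_sqrt_self _ (posSemidef_conjTranspose_mul_self A).nonneg]

variable [DecidableEq m]

theorem fromBlocks_zero_zero_nonneg {P : Matrix n n ℝ} {Q : Matrix m m ℝ} (hP : 0 ≤ P)
    (hQ : 0 ≤ Q) : 0 ≤ fromBlocks P 0 0 Q := by
  obtain ⟨C, rfl⟩ := CStarAlgebra.nonneg_iff_eq_star_mul_self.mp hP
  obtain ⟨D, rfl⟩ := CStarAlgebra.nonneg_iff_eq_star_mul_self.mp hQ
  convert star_mul_self_nonneg (fromBlocks C 0 0 D)
  simp only [star_eq_conjTranspose, fromBlocks_conjTranspose, fromBlocks_multiply]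
  simp

theorem cfc_abs_fromBlocks (A : Matrix m n ℝ) :
    cfc (fun x : ℝ => |x|) (fromBlocks 0 Aᴴ A 0) =
      fromBlocks (CFC.sqrt (Aᴴ * A)) 0 0 (CFC.sqrt (A * Aᴴ)) := by
  have hZ : IsSelfAdjoint (fromBlocks 0 Aᴴ A 0) := by
    rw [IsSelfAdjoint, star_eq_conjTranspose, fromBlocks_conjTranspose]; simp
  have habs : cfc (fun x : ℝ => |x|) (fromBlocks 0 Aᴴ A 0) =
      CFC.abs (fromBlocks 0 Aᴴ A 0) := by
    rw [CFC.abs_eq_cfc_norm _ hZ]; rfl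
  rw [habs, CFC.abs]
  refine CFC.sqrt_unique ?_
    (fromBlocks_zero_zero_nonneg (CFC.sqrt_nonneg _) (CFC.sqrt_nonneg _))
  rw [fromBlocks_multiply, CFC.sqrt_mul_sqrt_self _ (posSemidef_conjTranspose_mul_self A).nonneg,
    CFC.sqrt_mul_sqrt_self _ (posSemidef_self_mul_conjTranspose A).nonneg, star_eq_conjTranspose,
    fromBlocks_conjTranspose, fromBlocks_multiply]
  simp

/-- The Araki–Yamagami inequality in the Frobenius norm. -/
theorem norm_sqrt_conjTranspose_mul_self_sub_le (A B : Matrix m n ℝ) :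
    ‖CFC.sqrt (Aᴴ * A) - CFC.sqrt (Bᴴ * B)‖ ≤ √2 * ‖A - B‖ := by
  have hZ : ∀ C : Matrix m n ℝ, (fromBlocks 0 Cᴴ C 0).IsHermitian := fun C => by
    rw [IsHermitian, fromBlocks_conjTranspose]; simp
  have habs : LipschitzWith 1 (fun x : ℝ => |x|) := by
    refine LipschitzWith.of_dist_le_mul fun x y => ?_
    simpa [Real.dist_eq] using abs_abs_sub_abs_le_abs_sub x y
  have h := (hZ A).norm_cfc_sub_cfc_le (hZ B) habs
  rw [cfc_abs_fromBlocks, cfc_abs_fromBlocks, fromBlocks_sub, fromBlocks_sub,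
    ← sq_le_sq₀ (norm_nonneg _) (norm_nonneg _), frobenius_norm_fromBlocks_sq,
    frobenius_norm_fromBlocks_sq, ← conjTranspose_sub, frobenius_norm_conjTranspose] at h
  refine (sq_le_sq₀ (norm_nonneg _) (by positivity)).mp ?_
  rw [mul_pow, Real.sq_sqrt zero_le_two]
  simp only [sub_zero, norm_zero] at h
  nlinarith [sq_nonneg ‖CFC.sqrt (A * Aᴴ) - CFC.sqrt (B * Bᴴ)‖]

end Matrix

namespace GPR

open scoped Matrix.Norms.Frobenius MatrixOrder

section GramSqrt

variable {n d : ℕ}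

theorem gramSqrt_eq_sqrt (A : Matrix (Fin n) (Fin d) ℝ) : gramSqrt A = CFC.sqrt (Aᴴ * A) := by
  have hA := posSemidef_conjTranspose_mul_self A
  rw [CFC.sqrt_eq_real_sqrt _ hA.nonneg, cfcₙ_eq_cfc, hA.1.cfc_eq, IsHermitian.cfc]
  simp [gramSqrt]

theorem gramSqrt_mul_self (A : Matrix (Fin n) (Fin d) ℝ) : gramSqrt A * gramSqrt A = Aᵀ * A := by
  rw [gramSqrt_eq_sqrt, CFC.sqrt_mul_sqrt_self _ (posSemidef_conjTranspose_mul_self A).nonneg,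
    conjTranspose_eq_transpose_of_trivial]

theorem gramSqrt_neg (A : Matrix (Fin n) (Fin d) ℝ) : gramSqrt (-A) = gramSqrt A := by
  rw [gramSqrt_eq_sqrt, gramSqrt_eq_sqrt, conjTranspose_neg, Matrix.neg_mul, Matrix.mul_neg,
    neg_neg]

theorem norm_gramSqrt (A : Matrix (Fin n) (Fin d) ℝ) : ‖gramSqrt A‖ = ‖A‖ := by
  rw [gramSqrt_eq_sqrt, norm_sqrt_conjTranspose_mul_self]

theorem norm_gramSqrt_sub_le (A B : Matrix (Fin n) (Fin d) ℝ) :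
    ‖gramSqrt A - gramSqrt B‖ ≤ √2 * ‖A - B‖ := by
  rw [gramSqrt_eq_sqrt, gramSqrt_eq_sqrt]
  exact norm_sqrt_conjTranspose_mul_self_sub_le A B

end GramSqrt

section Tuples

variable {L : ℕ} {m n : Fin L → ℕ}

theorem fnorm_eq_sqrt_sum (X : ∀ ℓ, Matrix (Fin (m ℓ)) (Fin (n ℓ)) ℝ) :
    fnorm X = √(∑ ℓ, ‖X ℓ‖ ^ 2) := by
  simp only [fnorm, frobenius_norm_sq_eq_sum]

theorem fnorm_eq_norm (X : ∀ ℓ, Matrix (Fin (m ℓ)) (Fin (n ℓ)) ℝ) :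
    fnorm X = ‖(WithLp.toLp 2 X : PiLp 2 fun ℓ => Matrix (Fin (m ℓ)) (Fin (n ℓ)) ℝ)‖ := by
  rw [fnorm_eq_sqrt_sum, PiLp.norm_eq_of_L2]

theorem fnorm_nonneg (X : ∀ ℓ, Matrix (Fin (m ℓ)) (Fin (n ℓ)) ℝ) : 0 ≤ fnorm X :=
  Real.sqrt_nonneg _

theorem fnorm_add_le (X Y : ∀ ℓ, Matrix (Fin (m ℓ)) (Fin (n ℓ)) ℝ) :
    fnorm (X + Y) ≤ fnorm X + fnorm Y := by
  simp only [fnorm_eq_norm, WithLp.toLp_add, norm_add_le]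

theorem fnorm_smul (c : ℝ) (X : ∀ ℓ, Matrix (Fin (m ℓ)) (Fin (n ℓ)) ℝ) :
    fnorm (c • X) = |c| * fnorm X := by
  simp only [fnorm_eq_norm, WithLp.toLp_smul, norm_smul, Real.norm_eq_abs]

theorem fnorm_le_mul_fnorm {m' n' : Fin L → ℕ} {X : ∀ ℓ, Matrix (Fin (m ℓ)) (Fin (n ℓ)) ℝ}
    {Y : ∀ ℓ, Matrix (Fin (m' ℓ)) (Fin (n' ℓ)) ℝ} {c : ℝ} (hc : 0 ≤ c)
    (h : ∀ ℓ, ‖X ℓ‖ ≤ c * ‖Y ℓ‖) : fnorm X ≤ c * fnorm Y := by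
  rw [fnorm_eq_sqrt_sum, fnorm_eq_sqrt_sum, ← Real.sqrt_sq hc, ← Real.sqrt_mul (sq_nonneg c),
    Finset.mul_sum]
  gcongr with ℓ
  rw [← mul_pow]
  exact pow_le_pow_left₀ (norm_nonneg _) (h ℓ) 2

theorem fnorm_mul_le {k : Fin L → ℕ} (A : ∀ ℓ, Matrix (Fin (m ℓ)) (Fin (n ℓ)) ℝ)
    (B : ∀ ℓ, Matrix (Fin (n ℓ)) (Fin (k ℓ)) ℝ) :
    fnorm (fun ℓ => A ℓ * B ℓ) ≤ fnorm A * fnorm B := by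
  rw [fnorm_eq_sqrt_sum, fnorm_eq_sqrt_sum, fnorm_eq_sqrt_sum, ← Real.sqrt_mul (by positivity),
    Finset.sum_mul]
  gcongr with ℓ
  calc ‖A ℓ * B ℓ‖ ^ 2 ≤ ‖A ℓ‖ ^ 2 * ‖B ℓ‖ ^ 2 := by
        rw [← mul_pow]; gcongr; exact frobenius_norm_mul _ _
    _ ≤ ‖A ℓ‖ ^ 2 * ∑ ℓ', ‖B ℓ'‖ ^ 2 := by
        gcongr; exact Finset.single_le_sum (fun ℓ' _ => sq_nonneg ‖B ℓ'‖) (Finset.mem_univ ℓ)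

end Tuples

section SecondMoment

variable {L : ℕ} {N R : Fin L → ℕ}

/-- The polarization `uᵀv + vᵀu` of the second moment. -/
def symProd : V N R →ₗ[ℝ] V N R →ₗ[ℝ] ∀ ℓ, Matrix (Fin (R ℓ)) (Fin (R ℓ)) ℝ :=
  LinearMap.mk₂ ℝ (fun u v ℓ => (u ℓ)ᵀ * v ℓ + (v ℓ)ᵀ * u ℓ)
    (fun _ _ _ => by
      ext1; simp only [Pi.add_apply, transpose_add, Matrix.add_mul, Matrix.mul_add]; abel)
    (fun _ _ _ => by ext1; simp)
    (fun _ _ _ => by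
      ext1; simp only [Pi.add_apply, transpose_add, Matrix.add_mul, Matrix.mul_add]; abel)
    (fun _ _ _ => by ext1; simp)

theorem symProd_apply (u v : V N R) (ℓ : Fin L) :
    symProd u v ℓ = (u ℓ)ᵀ * v ℓ + (v ℓ)ᵀ * u ℓ := rfl

theorem symProd_sub_add (X Y : V N R) :
    symProd (X - Y) (X + Y) = (2 : ℝ) • (gram X - gram Y) := by
  ext1 ℓ
  simp only [symProd_apply, gram, Pi.sub_apply, Pi.add_apply, Pi.smul_apply, transpose_sub,
    transpose_add, Matrix.sub_mul, Matrix.add_mul, Matrix.mul_add, Matrix.mul_sub, two_smul]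
  abel

theorem gram_add_sub_gram_sub (u v : V N R) :
    gram (v + u) - gram (v - u) = (2 : ℝ) • symProd u v := by
  ext1 ℓ
  simp only [symProd_apply, gram, Pi.sub_apply, Pi.add_apply, Pi.smul_apply, transpose_sub,
    transpose_add, Matrix.sub_mul, Matrix.add_mul, Matrix.mul_add, Matrix.mul_sub, two_smul]
  abel

theorem fnorm_sqrtGram (X : V N R) : fnorm (sqrtGram X) = fnorm X := by
  simp only [fnorm_eq_sqrt_sum, sqrtGram, norm_gramSqrt]

theorem fnorm_sqrtGram_sub_le (X Y : V N R) :
    fnorm (sqrtGram X - sqrtGram Y) ≤ √2 * fnorm (X - Y) :=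
  fnorm_le_mul_fnorm (by positivity) fun ℓ => norm_gramSqrt_sub_le (X ℓ) (Y ℓ)

theorem fnorm_sqrtGram_sub_le_dSigma (X Y : V N R) :
    fnorm (sqrtGram X - sqrtGram Y) ≤ √2 * dSigma X Y := by
  rw [dSigma, mul_min_of_nonneg _ _ (by positivity)]
  refine le_min (fnorm_sqrtGram_sub_le X Y) ?_
  have hneg : sqrtGram (-Y) = sqrtGram Y := funext fun ℓ => gramSqrt_neg (Y ℓ)
  simpa [hneg] using fnorm_sqrtGram_sub_le X (-Y)

theorem fnorm_gram_sub_le (X Y : V N R) :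
    fnorm (gram X - gram Y) ≤ fnorm (sqrtGram X - sqrtGram Y) * (fnorm X + fnorm Y) := by
  set D := sqrtGram X - sqrtGram Y
  have hsplit : gram X - gram Y =
      (fun ℓ => sqrtGram X ℓ * D ℓ) + (fun ℓ => D ℓ * sqrtGram Y ℓ) := by
    ext1 ℓ
    simp only [gram, D, Pi.sub_apply, Pi.add_apply, ← gramSqrt_mul_self, sqrtGram]
    noncomm_ring
  calc fnorm (gram X - gram Y)
      ≤ fnorm (sqrtGram X) * fnorm D + fnorm D * fnorm (sqrtGram Y) := by
        rw [hsplit]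
        exact (fnorm_add_le _ _).trans (add_le_add (fnorm_mul_le _ _) (fnorm_mul_le _ _))
    _ = fnorm D * (fnorm X + fnorm Y) := by rw [fnorm_sqrtGram, fnorm_sqrtGram]; ring

theorem dSigma_nonneg (X Y : V N R) : 0 ≤ dSigma X Y :=
  le_min (fnorm_nonneg _) (fnorm_nonneg _)

theorem dSigma_mul_le (X Y : V N R) :
    dSigma X Y * (fnorm X + fnorm Y) ≤ 2 * (fnorm (X - Y) * fnorm (X + Y)) := by
  simp only [dSigma, fnorm_eq_norm, WithLp.toLp_sub, WithLp.toLp_add]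
  exact min_norm_sub_norm_add_mul_le _ _

theorem le_fnorm_sqrtGram_sub {c : ℝ} (hc : 0 ≤ c) (X Y : V N R)
    (h : c * (fnorm (X - Y) * fnorm (X + Y)) ≤ fnorm (symProd (X - Y) (X + Y))) :
    c / 4 * dSigma X Y ≤ fnorm (sqrtGram X - sqrtGram Y) := by
  have hsym : fnorm (symProd (X - Y) (X + Y)) = 2 * fnorm (gram X - gram Y) := by
    rw [symProd_sub_add, fnorm_smul, abs_two]
  rcases (add_nonneg (fnorm_nonneg X) (fnorm_nonneg Y)).eq_or_lt with h0 | hpos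
  · have hd : dSigma X Y ≤ 0 := (min_le_right _ _).trans ((fnorm_add_le X Y).trans h0.ge)
    nlinarith [fnorm_nonneg (sqrtGram X - sqrtGram Y)]
  refine le_of_mul_le_mul_right ?_ hpos
  calc c / 4 * dSigma X Y * (fnorm X + fnorm Y)
      ≤ c / 4 * (2 * (fnorm (X - Y) * fnorm (X + Y))) := by
        rw [mul_assoc]
        exact mul_le_mul_of_nonneg_left (dSigma_mul_le X Y) (by positivity)
    _ ≤ fnorm (symProd (X - Y) (X + Y)) / 2 := by linarith
    _ = fnorm (gram X - gram Y) := by rw [hsym]; ring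
    _ ≤ fnorm (sqrtGram X - sqrtGram Y) * (fnorm X + fnorm Y) := fnorm_gram_sub_le X Y

theorem exists_act_eq_of_gram_eq {X Y : V N R} (h : gram X = gram Y) :
    ∃ Q : HGroup N, act Q X = Y := by
  choose Q hQ hQX using fun ℓ =>
    exists_mem_unitaryGroup_mul_eq_of_conjTranspose_mul_self_eq (A := X ℓ) (B := Y ℓ)
      (by simpa only [gram, conjTranspose_eq_transpose_of_trivial] using congrFun h ℓ)
  exact ⟨fun ℓ => ⟨Q ℓ, hQ ℓ⟩, funext hQX⟩

theorem Transverse.mono {S S' : Set (V N R)} (h : Transverse S') (hS : S ⊆ S') : Transverse S :=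
  fun X hX Q hQX => h X (hS hX) Q (hS hQX)

theorem Transverse.eq_zero_or_eq_zero_of_symProd_eq_zero {T : Submodule ℝ (V N R)}
    (hT : Transverse (T : Set (V N R))) {u v : V N R} (hu : u ∈ T) (hv : v ∈ T)
    (h : symProd u v = 0) : u = 0 ∨ v = 0 := by
  have hgram : gram (v + u) = gram (v - u) := by
    rw [← sub_eq_zero, gram_add_sub_gram_sub, h, smul_zero]
  obtain ⟨Q, hQ⟩ := exists_act_eq_of_gram_eq hgram
  have htwo : ∀ w : V N R, w + w = 0 → w = 0 := fun w hw =>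
    (smul_eq_zero.mp (by rwa [two_smul])).resolve_left (two_ne_zero (α := ℝ))
  rcases hT _ (T.add_mem hv hu) Q (hQ ▸ T.sub_mem hv hu) with h' | h' <;> rw [hQ] at h'
  · refine .inl (htwo u ?_)
    calc u + u = (v + u) - (v - u) := by abel
      _ = 0 := by rw [h', sub_self]
  · refine .inr (htwo v ?_)
    calc v + v = (v - u) + (v + u) := by abel
      _ = 0 := by rw [h', neg_add_cancel]

theorem Transverse.exists_pos_mul_fnorm_le_fnorm_symProd {T : Submodule ℝ (V N R)}
    (hT : Transverse (T : Set (V N R))) :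
    ∃ c > 0, ∀ u ∈ T, ∀ v ∈ T, c * (fnorm u * fnorm v) ≤ fnorm (symProd u v) := by
  let e := (WithLp.linearEquiv 2 ℝ (V N R)).toLinearMap
  let e' := (WithLp.linearEquiv 2 ℝ (∀ ℓ, Matrix (Fin (R ℓ)) (Fin (R ℓ)) ℝ)).symm.toLinearMap
  obtain ⟨c, hc, hcT⟩ := (T.comap e).exists_pos_mul_norm_mul_norm_le
    ((symProd.compl₁₂ e e).compr₂ e') fun u hu v hv huv => by
      simpa [e, e'] using
        hT.eq_zero_or_eq_zero_of_symProd_eq_zero hu hv (by simpa [e, e'] using huv)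
  refine ⟨c, hc, fun u hu v hv => ?_⟩
  rw [fnorm_eq_norm, fnorm_eq_norm, fnorm_eq_norm]
  exact hcT (WithLp.toLp 2 u) hu (WithLp.toLp 2 v) hv

end SecondMoment

theorem secondMoment_biLipschitz_of_subspace_union_general
    (L : ℕ) (N R : Fin L → ℕ)
    (m : ℕ) (W : Fin m → Submodule ℝ (V N R))
    (M : Set (V N R)) (hM : M = ⋃ i, (W i : Set (V N R)))
    (htrans : Transverse (⋃ i, ⋃ j, ((W i ⊔ W j : Submodule ℝ (V N R)) : Set (V N R)))) :
    ∃ C₁ C₂ : ℝ, 0 < C₁ ∧ C₁ ≤ C₂ ∧ ∀ X ∈ M, ∀ Y ∈ M,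
      C₁ * dSigma X Y ≤ fnorm (sqrtGram X - sqrtGram Y) ∧
      fnorm (sqrtGram X - sqrtGram Y) ≤ C₂ * dSigma X Y := by
  choose c hc hcW using fun p : Fin m × Fin m =>
    Transverse.exists_pos_mul_fnorm_le_fnorm_symProd
      (htrans.mono fun X hX => Set.mem_iUnion₂.mpr ⟨p.1, p.2, hX⟩)
  obtain ⟨c₀, hc₀, hc₀le⟩ := exists_pos_forall_le_of_finite hc
  refine ⟨min (c₀ / 4) √2, √2, by positivity, min_le_right _ _, fun X hX Y hY => ?_⟩
  obtain ⟨i, hXi⟩ := Set.mem_iUnion.mp (hM ▸ hX)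
  obtain ⟨j, hYj⟩ := Set.mem_iUnion.mp (hM ▸ hY)
  have hXij : X ∈ W i ⊔ W j := Submodule.mem_sup_left hXi
  have hYij : Y ∈ W i ⊔ W j := Submodule.mem_sup_right hYj
  refine ⟨?_, fnorm_sqrtGram_sub_le_dSigma X Y⟩
  calc min (c₀ / 4) √2 * dSigma X Y ≤ c (i, j) / 4 * dSigma X Y := by
        gcongr
        · exact dSigma_nonneg X Y
        · linarith [min_le_left (c₀ / 4) √2, hc₀le (i, j)]
    _ ≤ fnorm (sqrtGram X - sqrtGram Y) := le_fnorm_sqrtGram_sub (hc (i, j)).le X Y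
        (hcW (i, j) _ (sub_mem hXij hYij) _ (add_mem hXij hYij))

/-- If `M` is a finite union of linear subspaces `W i` and
`∪_{i,j} (W i + W j)` is transverse to the orbits of `H`, then the second moment is
bi-Lipschitz on `M`. -/
theorem secondMoment_biLipschitz_of_subspace_union
    (L : ℕ) (hL : 0 < L) (N R : Fin L → ℕ) (hN : ∀ ℓ, 0 < N ℓ) (hR : ∀ ℓ, 0 < R ℓ)
    (m : ℕ) (W : Fin m → Submodule ℝ (V N R))
    (M : Set (V N R)) (hM : M = ⋃ i, (W i : Set (V N R)))
    (htrans : Transverse (⋃ i, ⋃ j, ((W i ⊔ W j : Submodule ℝ (V N R)) : Set (V N R)))) :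
    ∃ C₁ C₂ : ℝ, 0 < C₁ ∧ C₁ ≤ C₂ ∧ ∀ X ∈ M, ∀ Y ∈ M,
      C₁ * dSigma X Y ≤ fnorm (sqrtGram X - sqrtGram Y) ∧
      fnorm (sqrtGram X - sqrtGram Y) ≤ C₂ * dSigma X Y :=
  secondMoment_biLipschitz_of_subspace_union_general L N R m W M hM htrans

end GPR
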